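/- For ε > 0 and 0 < σ < 1 define U_ε(σ) := √(σ² + ε²(1 − σ²)²/(4σ²)) − ε(1 − σ²)/(2σ). Then for all σ₁, σ₂ ∈ (0, 1) and all 0 < ε ≤ 2σ₁σ₂/√(1 − σ₁²σ₂²): |U_ε(σ₁) − U_ε(σ₂)| ≤ (1 + (ε/2)(1 + 1/(σ₁σ₂)))·|σ₁ − σ₂|. -/
import Mathlib


open Real

/-- `U_ε(σ) = √(σ² + ε²(1 − σ²)²/(4σ²)) − ε(1 − σ²)/(2σ)`, the standard deviation
produced by one Schrödinger-bridge step (with surrogate `N(0, (σ²/(1−σ²)) I_d)`) applied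
to the centered Gaussian with per-coordinate standard deviation `σ < 1`. -/
noncomputable def sbStepSDKL (ε σ : ℝ) : ℝ :=
  Real.sqrt (σ ^ 2 + ε ^ 2 * (1 - σ ^ 2) ^ 2 / (4 * σ ^ 2)) - ε * (1 - σ ^ 2) / (2 * σ)

lemma sb_le_sqrt_aux (a b f : ℝ) (ha : 0 ≤ a) (hb : 0 ≤ b) (h : b ^ 2 = a ^ 2 + f ^ 2) :
    a ≤ b := by nlinarith [sq_nonneg f]

/-- Polynomial core of the key estimate `K f ≤ σ + g`. -/
lemma sb_key (s σ ε g : ℝ) (hs0 : 0 < s) (hs1 : s < 1) (hε0 : 0 < ε)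
    (hεsq : ε ^ 2 * (1 - s ^ 2) ≤ 4 * s ^ 2)
    (hσ0 : 0 < σ) (hσ1 : σ < 1) (hsσ : s ≤ σ)
    (hg0 : 0 ≤ g) (hg4 : 4 * σ ^ 2 * g ^ 2 = 4 * σ ^ 4 + ε ^ 2 * (1 - σ ^ 2) ^ 2) :
    ε ^ 2 * (1 + s) * (1 - σ ^ 2) ≤ 4 * s * σ ^ 2 + 4 * s * σ * g := by
  have hσ2 : (0:ℝ) ≤ 1 - σ ^ 2 := by nlinarith
  have hQ : (ε ^ 2 * (1 + s) ^ 2 * (1 - σ ^ 2) - 8 * s * σ ^ 2 * (1 + s)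
      - 4 * s ^ 2 * (1 - σ ^ 2)) * (1 - s) ≤ 0 := by
    nlinarith [mul_le_mul_of_nonneg_right hεsq
        (mul_nonneg (by linarith : (0:ℝ) ≤ 1 + s) hσ2),
      mul_le_mul hsσ hsσ hs0.le hσ0.le, hs0, hσ0]
  have hQ0 : ε ^ 2 * (1 + s) ^ 2 * (1 - σ ^ 2) - 8 * s * σ ^ 2 * (1 + s)
      - 4 * s ^ 2 * (1 - σ ^ 2) ≤ 0 := by
    nlinarith [hQ]
  have hεQ : ε ^ 2 * (1 - σ ^ 2) * (ε ^ 2 * (1 + s) ^ 2 * (1 - σ ^ 2)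
      - 8 * s * σ ^ 2 * (1 + s) - 4 * s ^ 2 * (1 - σ ^ 2)) ≤ 0 :=
    mul_nonpos_of_nonneg_of_nonpos (mul_nonneg (sq_nonneg ε) hσ2) hQ0
  rcases le_or_gt (ε ^ 2 * (1 + s) * (1 - σ ^ 2)) (4 * s * σ ^ 2) with h | h
  · nlinarith [mul_nonneg (mul_nonneg hs0.le hσ0.le) hg0]
  · have hg16 : 16 * s ^ 2 * σ ^ 2 * g ^ 2
        = 4 * s ^ 2 * (4 * σ ^ 4 + ε ^ 2 * (1 - σ ^ 2) ^ 2) := by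
      linear_combination 4 * s ^ 2 * hg4
    have hPsq : (ε ^ 2 * (1 + s) * (1 - σ ^ 2) - 4 * s * σ ^ 2) ^ 2
        ≤ (4 * s * σ * g) ^ 2 := by nlinarith [hg16, hεQ]
    nlinarith [hPsq, mul_nonneg (mul_nonneg (mul_nonneg (by norm_num : (0:ℝ) ≤ 4) hs0.le)
        hσ0.le) hg0, h]

set_option maxHeartbeats 1000000 in
/-- The Schrödinger-bridge step for the time-reversed gradient flow of (one half) KL
divergence relative to `N(0, I_d)` is Lipschitz on centered Gaussians with constant
`1 + (ε/2)(1 + 1/(σ₁σ₂))`, provided `0 < ε ≤ 2σ₁σ₂/√(1 − σ₁²σ₂²)`. -/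
theorem sbStepSDKL_lipschitz (σ₁ σ₂ ε : ℝ)
    (hσ₁ : σ₁ ∈ Set.Ioo (0 : ℝ) 1) (hσ₂ : σ₂ ∈ Set.Ioo (0 : ℝ) 1)
    (hε0 : 0 < ε) (hε : ε ≤ 2 * σ₁ * σ₂ / Real.sqrt (1 - σ₁ ^ 2 * σ₂ ^ 2)) :
    |sbStepSDKL ε σ₁ - sbStepSDKL ε σ₂|
      ≤ (1 + (ε / 2) * (1 + 1 / (σ₁ * σ₂))) * |σ₁ - σ₂| := by
  obtain ⟨h1, h2⟩ := hσ₁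
  obtain ⟨h3, h4⟩ := hσ₂
  set s : ℝ := σ₁ * σ₂ with hs_def
  have hs0 : 0 < s := mul_pos h1 h3
  have hs1 : s < 1 := by nlinarith
  clear_value s
  -- process the ε hypothesis
  have hone : (0:ℝ) < 1 - σ₁ ^ 2 * σ₂ ^ 2 := by nlinarith
  have hsqrtpos : 0 < Real.sqrt (1 - σ₁ ^ 2 * σ₂ ^ 2) := Real.sqrt_pos.mpr hone
  have hε' : ε * Real.sqrt (1 - σ₁ ^ 2 * σ₂ ^ 2) ≤ 2 * s := by
    have := (le_div_iff₀ hsqrtpos).mp hε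
    linarith [this]
  have hεsq : ε ^ 2 * (1 - s ^ 2) ≤ 4 * s ^ 2 := by
    have h := mul_le_mul hε' hε' (by positivity) (by positivity)
    have hss : Real.sqrt (1 - σ₁ ^ 2 * σ₂ ^ 2) * Real.sqrt (1 - σ₁ ^ 2 * σ₂ ^ 2)
        = 1 - σ₁ ^ 2 * σ₂ ^ 2 := Real.mul_self_sqrt hone.le
    have heq : ε ^ 2 * (1 - s ^ 2)
        = (ε * Real.sqrt (1 - σ₁ ^ 2 * σ₂ ^ 2)) * (ε * Real.sqrt (1 - σ₁ ^ 2 * σ₂ ^ 2)) := by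
      rw [show ε * Real.sqrt (1 - σ₁ ^ 2 * σ₂ ^ 2) * (ε * Real.sqrt (1 - σ₁ ^ 2 * σ₂ ^ 2))
          = ε * ε * (Real.sqrt (1 - σ₁ ^ 2 * σ₂ ^ 2) * Real.sqrt (1 - σ₁ ^ 2 * σ₂ ^ 2)) by ring,
        hss, hs_def]
      ring
    calc ε ^ 2 * (1 - s ^ 2) = _ := heq
      _ ≤ 2 * s * (2 * s) := h
      _ = 4 * s ^ 2 := by ring
  -- set up f, g
  set f₁ : ℝ := ε * (1 - σ₁ ^ 2) / (2 * σ₁) with hf₁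
  set f₂ : ℝ := ε * (1 - σ₂ ^ 2) / (2 * σ₂) with hf₂
  have hf₁0 : 0 ≤ f₁ := by
    apply div_nonneg _ (by positivity)
    exact mul_nonneg hε0.le (by nlinarith)
  have hf₂0 : 0 ≤ f₂ := by
    apply div_nonneg _ (by positivity)
    exact mul_nonneg hε0.le (by nlinarith)
  have harg₁ : σ₁ ^ 2 + ε ^ 2 * (1 - σ₁ ^ 2) ^ 2 / (4 * σ₁ ^ 2) = σ₁ ^ 2 + f₁ ^ 2 := by
    rw [hf₁]; field_simp; ring
  have harg₂ : σ₂ ^ 2 + ε ^ 2 * (1 - σ₂ ^ 2) ^ 2 / (4 * σ₂ ^ 2) = σ₂ ^ 2 + f₂ ^ 2 := by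
    rw [hf₂]; field_simp; ring
  have hfa₁ : (2 * σ₁) * f₁ = ε * (1 - σ₁ ^ 2) := by rw [hf₁]; field_simp
  have hfa₂ : (2 * σ₂) * f₂ = ε * (1 - σ₂ ^ 2) := by rw [hf₂]; field_simp
  set g₁ : ℝ := Real.sqrt (σ₁ ^ 2 + f₁ ^ 2) with hg₁def
  set g₂ : ℝ := Real.sqrt (σ₂ ^ 2 + f₂ ^ 2) with hg₂def
  have hg₁sq : g₁ ^ 2 = σ₁ ^ 2 + f₁ ^ 2 := Real.sq_sqrt (by positivity)
  have hg₂sq : g₂ ^ 2 = σ₂ ^ 2 + f₂ ^ 2 := Real.sq_sqrt (by positivity)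
  have hg₁0 : 0 ≤ g₁ := Real.sqrt_nonneg _
  have hg₂0 : 0 ≤ g₂ := Real.sqrt_nonneg _
  have hU₁ : sbStepSDKL ε σ₁ = g₁ - f₁ := by
    simp only [sbStepSDKL]; rw [harg₁]
  have hU₂ : sbStepSDKL ε σ₂ = g₂ - f₂ := by
    simp only [sbStepSDKL]; rw [harg₂]
  clear_value g₁ g₂ f₁ f₂
  clear harg₁ harg₂ hg₁def hg₂def hε hε' hsqrtpos hone
  have hg₁ : σ₁ ≤ g₁ := sb_le_sqrt_aux _ _ _ h1.le hg₁0 hg₁sq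
  have hg₂ : σ₂ ≤ g₂ := sb_le_sqrt_aux _ _ _ h3.le hg₂0 hg₂sq
  set K : ℝ := ε * (1 + s) / (2 * s) with hK_def
  have hK0 : 0 < K := by positivity
  have hKs : 2 * s * K = ε * (1 + s) := by
    rw [hK_def]; field_simp
  clear_value K
  have hconst : 1 + (ε / 2) * (1 + 1 / s) = 1 + K := by
    have hnz : (s : ℝ) ≠ 0 := ne_of_gt hs0
    field_simp
    linear_combination -hKs
  have hfK : f₁ - f₂ = -(K * (σ₁ - σ₂)) := by
    have h2s : (2 * s : ℝ) ≠ 0 := by positivity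
    apply mul_left_cancel₀ h2s
    rw [hs_def] at hKs ⊢
    linear_combination σ₂ * hfa₁ - σ₁ * hfa₂ + (σ₁ - σ₂) * hKs
  -- key estimates K fᵢ ≤ σᵢ + gᵢ
  have hg4₁ : 4 * σ₁ ^ 2 * g₁ ^ 2 = 4 * σ₁ ^ 4 + ε ^ 2 * (1 - σ₁ ^ 2) ^ 2 := by
    linear_combination 4 * σ₁ ^ 2 * hg₁sq + (2 * σ₁ * f₁ + ε * (1 - σ₁ ^ 2)) * hfa₁
  have hg4₂ : 4 * σ₂ ^ 2 * g₂ ^ 2 = 4 * σ₂ ^ 4 + ε ^ 2 * (1 - σ₂ ^ 2) ^ 2 := by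
    linear_combination 4 * σ₂ ^ 2 * hg₂sq + (2 * σ₂ * f₂ + ε * (1 - σ₂ ^ 2)) * hfa₂
  have hsσ₁ : s ≤ σ₁ := by
    rw [hs_def]
    calc σ₁ * σ₂ ≤ σ₁ * 1 := by
          exact mul_le_mul_of_nonneg_left h4.le h1.le
      _ = σ₁ := mul_one σ₁
  have hsσ₂ : s ≤ σ₂ := by
    rw [hs_def]
    calc σ₁ * σ₂ ≤ 1 * σ₂ := by
          exact mul_le_mul_of_nonneg_right h2.le h3.le
      _ = σ₂ := one_mul σ₂
  have hk₁ := sb_key s σ₁ ε g₁ hs0 hs1 hε0 hεsq h1 h2 hsσ₁ hg₁0 hg4₁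
  have hk₂ := sb_key s σ₂ ε g₂ hs0 hs1 hε0 hεsq h3 h4 hsσ₂ hg₂0 hg4₂
  have hKf₁ : (4 * s * σ₁) * (K * f₁) = ε ^ 2 * (1 + s) * (1 - σ₁ ^ 2) := by
    linear_combination (2 * σ₁ * f₁) * hKs + ε * (1 + s) * hfa₁
  have hKf₂ : (4 * s * σ₂) * (K * f₂) = ε ^ 2 * (1 + s) * (1 - σ₂ ^ 2) := by
    linear_combination (2 * σ₂ * f₂) * hKs + ε * (1 + s) * hfa₂
  have key₁ : K * f₁ ≤ σ₁ + g₁ := by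
    refine le_of_mul_le_mul_left ?_ (show (0:ℝ) < 4 * s * σ₁ by positivity)
    rw [hKf₁]; linarith [hk₁]
  have key₂ : K * f₂ ≤ σ₂ + g₂ := by
    refine le_of_mul_le_mul_left ?_ (show (0:ℝ) < 4 * s * σ₂ by positivity)
    rw [hKf₂]; linarith [hk₂]
  -- |g₁ - g₂| ≤ |σ₁ - σ₂|
  have hdiff : (g₁ - g₂) * (g₁ + g₂) = (σ₁ - σ₂) * (σ₁ + σ₂ - K * (f₁ + f₂)) := by
    linear_combination hg₁sq - hg₂sq + (f₁ + f₂) * hfK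
  have hM : |σ₁ + σ₂ - K * (f₁ + f₂)| ≤ g₁ + g₂ := by
    rw [abs_le]
    constructor
    · linarith [key₁, key₂]
    · linarith [mul_nonneg hK0.le hf₁0, mul_nonneg hK0.le hf₂0, hg₁, hg₂]
  have hgg : 0 < g₁ + g₂ := by linarith
  have hgabs : |g₁ - g₂| ≤ |σ₁ - σ₂| := by
    have h5 : |g₁ - g₂| * (g₁ + g₂) ≤ |σ₁ - σ₂| * (g₁ + g₂) := by
      calc |g₁ - g₂| * (g₁ + g₂) = |(g₁ - g₂) * (g₁ + g₂)| := by
            rw [abs_mul, abs_of_pos hgg]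
        _ = |σ₁ - σ₂| * |σ₁ + σ₂ - K * (f₁ + f₂)| := by rw [hdiff, abs_mul]
        _ ≤ |σ₁ - σ₂| * (g₁ + g₂) := mul_le_mul_of_nonneg_left hM (abs_nonneg _)
    exact le_of_mul_le_mul_right h5 hgg
  -- assemble
  rw [hU₁, hU₂, hconst]
  have hrw : g₁ - f₁ - (g₂ - f₂) = (g₁ - g₂) + K * (σ₁ - σ₂) := by
    linarith [hfK]
  rw [hrw]
  calc |(g₁ - g₂) + K * (σ₁ - σ₂)| ≤ |g₁ - g₂| + |K * (σ₁ - σ₂)| := abs_add_le _ _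
    _ ≤ |σ₁ - σ₂| + K * |σ₁ - σ₂| := by
        rw [abs_mul, abs_of_pos hK0]; linarith
    _ = (1 + K) * |σ₁ - σ₂| := by ring
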